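/- Let a > 1. For every integer m ≥ 1 and all reals 0 ≤ x < z, the kernel mass of the modified Szász–Mirakjan–Kantorovich operator on [z,∞) satisfies R̂_{m,a}(1_{[z,∞)}; x) ≤ Λ²_m(x)/(z − x)², and consequently R̂_{m,a}(1_{[z,∞)}; x) ≤ (1 + x)²/(m·(z − x)²). Here 1_{[z,∞)} denotes the indicator function of [z,∞). -/

import Mathlib

open Real MeasureTheory Filter

/-- The modified Szász–Mirakjan–Kantorovich operator of Mishra and Yadav. -/
noncomputable def szaszKant (a : ℝ) (m : ℕ) (f : ℝ → ℝ) (x : ℝ) : ℝ :=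
  (m : ℝ) * ∑' k : ℕ,
    Real.exp (-(x * Real.log a / (a ^ ((1 : ℝ) / (m : ℝ)) - 1))) *
      (x * Real.log a / (a ^ ((1 : ℝ) / (m : ℝ)) - 1)) ^ k / (Nat.factorial k : ℝ) *
      ∫ t in ((k : ℝ) / (m : ℝ))..(((k : ℝ) + 1) / (m : ℝ)), f t

/-- The `n`-th central moment of the operator. -/
noncomputable def szaszKantCM (a : ℝ) (m : ℕ) (n : ℕ) (x : ℝ) : ℝ :=
  szaszKant a m (fun t => (t - x) ^ n) x

/-!
Writing `l = x log a / (a^{1/m} - 1)`, the operator averages `f` over `[k/m, (k+1)/m]` against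
Poisson weights `e^{-l} l^k / k!`. From the first three Poisson moments, its second moment about
any `y` is the variance `l/m² + 1/(12m²)` plus the squared bias `(l/m + 1/(2m) - y)²`, and the
first bound is Chebyshev's inequality `1_{[z,∞)}(t) ≤ (t - y)²/(z - y)²` at `y = x`.
For the second, `x - l/m` need not be small, so Chebyshev about `x` does not give `O(1/m)`.
But `log a ≤ m (a^{1/m} - 1)` gives `l/m ≤ x`, so centring at `y = min(x, l/m + 1/(2m)) ≤ x`
leaves a bias of at most `1/(2m)`.
-/

open scoped Nat

theorem hasSum_poisson (l : ℝ) : HasSum (fun k : ℕ => exp (-l) * l ^ k / k !) 1 := by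
  simpa [mul_div_assoc, ← exp_add, ← exp_eq_exp_ℝ] using
    (NormedSpace.expSeries_div_hasSum_exp l).mul_left (exp (-l))

theorem HasSum.natCast_mul_poisson {f : ℕ → ℝ} {l s : ℝ}
    (h : HasSum (fun k : ℕ => f (k + 1) * (Real.exp (-l) * l ^ k / k !)) s) :
    HasSum (fun k : ℕ => k * f k * (Real.exp (-l) * l ^ k / k !)) (l * s) := by
  have hsucc : (fun k : ℕ => ((k + 1 : ℕ) : ℝ) * f (k + 1) *
      (Real.exp (-l) * l ^ (k + 1) / (k + 1)!)) =
      fun k : ℕ => l * (f (k + 1) * (Real.exp (-l) * l ^ k / k !)) := by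
    funext k
    rw [Nat.factorial_succ]
    push_cast
    field_simp
    ring
  have := HasSum.zero_add (f := fun k : ℕ => k * f k * (Real.exp (-l) * l ^ k / k !))
    (hsucc ▸ h.mul_left l)
  simpa using this

theorem hasSum_natCast_mul_poisson (l : ℝ) :
    HasSum (fun k : ℕ => k * (exp (-l) * l ^ k / k !)) l := by
  have h : HasSum (fun k : ℕ => (1 : ℝ) * (exp (-l) * l ^ k / k !)) 1 := by
    simpa only [one_mul] using hasSum_poisson l
  have h2 := HasSum.natCast_mul_poisson (f := fun _ => 1) h
  simpa only [mul_one] using h2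

theorem hasSum_natCast_sq_mul_poisson (l : ℝ) :
    HasSum (fun k : ℕ => (k : ℝ) ^ 2 * (exp (-l) * l ^ k / k !)) (l ^ 2 + l) := by
  have h : HasSum (fun k : ℕ => ((k + 1 : ℕ) : ℝ) * (exp (-l) * l ^ k / k !)) (l + 1) := by
    simpa only [Nat.cast_succ, add_mul, one_mul] using
      (hasSum_natCast_mul_poisson l).add (hasSum_poisson l)
  have h2 := HasSum.natCast_mul_poisson (f := fun k => (k : ℝ)) h
  simpa only [sq, mul_add, mul_one] using h2

theorem integral_sub_sq (A B y : ℝ) :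
    ∫ t in A..B, (t - y) ^ 2 = ((B - y) ^ 3 - (A - y) ^ 3) / 3 := by
  simp [intervalIntegral.integral_comp_sub_right fun t => t ^ 2, integral_pow]
  norm_num

noncomputable def poissonKantorovich (m : ℕ) (l : ℝ) (f : ℝ → ℝ) : ℝ :=
  m * ∑' k : ℕ, exp (-l) * l ^ k / k ! * ∫ t in (k : ℝ) / m..((k : ℝ) + 1) / m, f t

theorem szaszKant_eq_poissonKantorovich (a : ℝ) (m : ℕ) (f : ℝ → ℝ) (x : ℝ) :
    szaszKant a m f x =
      poissonKantorovich m (x * log a / (a ^ ((1 : ℝ) / m) - 1)) f :=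
  rfl

theorem indicator_Ici_le_sq_div {y z : ℝ} (hyz : y < z) (t : ℝ) :
    Set.indicator (Set.Ici z) (fun _ => (1 : ℝ)) t ≤ (t - y) ^ 2 / (z - y) ^ 2 := by
  by_cases ht : z ≤ t
  · rw [Set.indicator_of_mem (Set.mem_Ici.2 ht), one_le_div (by nlinarith)]
    exact pow_le_pow_left₀ (by linarith) (by linarith) 2
  · rw [Set.indicator_of_notMem (by simpa using ht)]
    positivity

section poissonKantorovich

variable {m : ℕ} {l : ℝ}

theorem hasSum_poisson_mul_integral_sub_sq (hm : m ≠ 0) (y : ℝ) :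
    HasSum (fun k : ℕ => exp (-l) * l ^ k / k ! *
        ∫ t in (k : ℝ) / m..((k : ℝ) + 1) / m, (t - y) ^ 2)
      ((l / m ^ 2 + 1 / (12 * m ^ 2) + (l / m + 1 / (2 * m) - y) ^ 2) / m) := by
  have hm' : (m : ℝ) ≠ 0 := Nat.cast_ne_zero.mpr hm
  have hterm : (fun k : ℕ => exp (-l) * l ^ k / k ! *
      ∫ t in (k : ℝ) / m..((k : ℝ) + 1) / m, (t - y) ^ 2) = fun k : ℕ =>
        1 / (m : ℝ) ^ 3 * ((k : ℝ) ^ 2 * (exp (-l) * l ^ k / k !)) +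
        (1 / (m : ℝ) ^ 3 - 2 * y / m ^ 2) * (k * (exp (-l) * l ^ k / k !)) +
        (y ^ 2 / m - y / m ^ 2 + 1 / (3 * (m : ℝ) ^ 3)) * (exp (-l) * l ^ k / k !) := by
    funext k
    rw [integral_sub_sq]
    field_simp
    ring
  have hsum : (l / m ^ 2 + 1 / (12 * m ^ 2) + (l / m + 1 / (2 * m) - y) ^ 2) / m =
      1 / (m : ℝ) ^ 3 * (l ^ 2 + l) + (1 / (m : ℝ) ^ 3 - 2 * y / m ^ 2) * l +
        (y ^ 2 / m - y / m ^ 2 + 1 / (3 * (m : ℝ) ^ 3)) * 1 := by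
    field_simp
    ring
  rw [hterm, hsum]
  exact (((hasSum_natCast_sq_mul_poisson l).mul_left _).add
    ((hasSum_natCast_mul_poisson l).mul_left _)).add ((hasSum_poisson l).mul_left _)

theorem poissonKantorovich_sub_sq (hm : m ≠ 0) (y : ℝ) :
    poissonKantorovich m l (fun t => (t - y) ^ 2) =
      l / m ^ 2 + 1 / (12 * m ^ 2) + (l / m + 1 / (2 * m) - y) ^ 2 := by
  rw [poissonKantorovich, (hasSum_poisson_mul_integral_sub_sq (l := l) hm y).tsum_eq]
  field_simp [Nat.cast_ne_zero.mpr hm]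

theorem poissonKantorovich_div_const (f : ℝ → ℝ) (c : ℝ) :
    poissonKantorovich m l (fun t => f t / c) = poissonKantorovich m l f / c := by
  simp only [poissonKantorovich, intervalIntegral.integral_div, ← mul_div_assoc, tsum_div_const]

theorem poissonKantorovich_mono {f g : ℝ → ℝ} (hl : 0 ≤ l) (hf : 0 ≤ f) (hfg : f ≤ g)
    (hfi : LocallyIntegrable f) (hgi : LocallyIntegrable g)
    (hg : Summable fun k : ℕ => exp (-l) * l ^ k / k ! *
      ∫ t in (k : ℝ) / m..((k : ℝ) + 1) / m, g t) :
    poissonKantorovich m l f ≤ poissonKantorovich m l g := by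
  have hle : ∀ k : ℕ, (k : ℝ) / m ≤ ((k : ℝ) + 1) / m := fun k =>
    div_le_div_of_nonneg_right (by linarith) m.cast_nonneg
  have hterm : ∀ k : ℕ, exp (-l) * l ^ k / k ! * ∫ t in (k : ℝ) / m..((k : ℝ) + 1) / m, f t ≤
      exp (-l) * l ^ k / k ! * ∫ t in (k : ℝ) / m..((k : ℝ) + 1) / m, g t := fun k =>
    mul_le_mul_of_nonneg_left (intervalIntegral.integral_mono (hle k)
      (hfi.integrableOn_isCompact isCompact_uIcc).intervalIntegrable
      (hgi.integrableOn_isCompact isCompact_uIcc).intervalIntegrable hfg) (by positivity)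
  have hnonneg : ∀ k : ℕ,
      0 ≤ exp (-l) * l ^ k / k ! * ∫ t in (k : ℝ) / m..((k : ℝ) + 1) / m, f t := fun k =>
    mul_nonneg (by positivity) (intervalIntegral.integral_nonneg (hle k) fun t _ => hf t)
  exact mul_le_mul_of_nonneg_left
    ((hg.of_nonneg_of_le hnonneg hterm).tsum_le_tsum hterm hg) m.cast_nonneg

theorem poissonKantorovich_indicator_Ici_le (hl : 0 ≤ l) (hm : m ≠ 0) {y z : ℝ} (hyz : y < z) :
    poissonKantorovich m l (Set.indicator (Set.Ici z) fun _ => 1) ≤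
      poissonKantorovich m l (fun t => (t - y) ^ 2) / (z - y) ^ 2 := by
  rw [← poissonKantorovich_div_const]
  refine poissonKantorovich_mono hl (Set.indicator_nonneg fun _ _ => zero_le_one)
    (indicator_Ici_le_sq_div hyz) ((locallyIntegrable_const 1).indicator measurableSet_Ici)
    (by fun_prop : Continuous fun t => (t - y) ^ 2 / (z - y) ^ 2).locallyIntegrable ?_
  simpa only [intervalIntegral.integral_div, mul_div_assoc] using
    (hasSum_poisson_mul_integral_sub_sq (l := l) hm y).summable.div_const ((z - y) ^ 2)

theorem exists_le_poissonKantorovich_sub_sq_le (hm : m ≠ 0) {x : ℝ} (hlx : l / m ≤ x) :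
    ∃ y ≤ x, poissonKantorovich m l (fun t => (t - y) ^ 2) ≤ (1 + x) ^ 2 / m := by
  set μ := l / m + 1 / (2 * m)
  refine ⟨min x μ, min_le_left _ _, ?_⟩
  have hm1 : (1 : ℝ) ≤ m := Nat.one_le_cast.mpr (Nat.pos_of_ne_zero hm)
  have hvar : l / m ^ 2 ≤ x / m := by
    rw [sq, ← div_div]
    gcongr
  have hbias : (μ - min x μ) ^ 2 ≤ (1 / (2 * m)) ^ 2 := by
    apply pow_le_pow_left₀ (sub_nonneg.2 (min_le_right _ _))
    have : 0 < 1 / (2 * (m : ℝ)) := by positivity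
    rcases min_cases x μ with ⟨h, _⟩ | ⟨h, _⟩ <;> rw [h] <;> linarith
  rw [poissonKantorovich_sub_sq hm]
  calc l / m ^ 2 + 1 / (12 * m ^ 2) + (μ - min x μ) ^ 2
      ≤ x / m + 1 / (12 * m ^ 2) + (1 / (2 * m)) ^ 2 := by gcongr
    _ = (x + 1 / (3 * m)) / m := by field_simp; ring
    _ ≤ (1 + x) ^ 2 / m := by
      gcongr
      nlinarith [sq_nonneg (x + 1 / 2), show 1 / (3 * (m : ℝ)) ≤ 1 / 3 by gcongr; linarith]

theorem poissonKantorovich_indicator_Ici_le_one_add_sq_div (hl : 0 ≤ l) (hm : m ≠ 0) {x z : ℝ}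
    (hlx : l / m ≤ x) (hxz : x < z) :
    poissonKantorovich m l (Set.indicator (Set.Ici z) fun _ => 1) ≤
      (1 + x) ^ 2 / (m * (z - x) ^ 2) := by
  obtain ⟨y, hyx, hy⟩ := exists_le_poissonKantorovich_sub_sq_le hm hlx
  calc poissonKantorovich m l (Set.indicator (Set.Ici z) fun _ => 1)
      ≤ poissonKantorovich m l (fun t => (t - y) ^ 2) / (z - y) ^ 2 :=
        poissonKantorovich_indicator_Ici_le hl hm (hyx.trans_lt hxz)
    _ ≤ (1 + x) ^ 2 / m / (z - x) ^ 2 := by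
        refine div_le_div₀ (by positivity) hy (by nlinarith) ?_
        exact pow_le_pow_left₀ (by linarith) (by linarith) 2
    _ = (1 + x) ^ 2 / (m * (z - x) ^ 2) := div_div _ _ _

end poissonKantorovich

theorem log_div_rpow_one_div_sub_one_le {a m : ℝ} (ha : 1 < a) (hm : 0 < m) :
    log a / (a ^ (1 / m) - 1) ≤ m := by
  have hpos : 0 < log a / m := div_pos (log_pos ha) hm
  have hexp : a ^ (1 / m) = exp (log a / m) := by
    rw [rpow_def_of_pos (by linarith), mul_one_div]
  have h := add_one_le_exp (log a / m)
  rw [div_le_iff₀ (by rw [hexp]; linarith), hexp]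
  calc log a = m * (log a / m) := by field_simp
    _ ≤ m * (exp (log a / m) - 1) := by gcongr; linarith

theorem szaszKant_kernel_right_tail (a : ℝ) (ha : 1 < a) (m : ℕ) (hm : 1 ≤ m)
    (x z : ℝ) (hx : 0 ≤ x) (hxz : x < z) :
    szaszKant a m (Set.indicator (Set.Ici z) fun _ => (1 : ℝ)) x ≤
        szaszKantCM a m 2 x / (z - x) ^ 2 ∧
      szaszKant a m (Set.indicator (Set.Ici z) fun _ => (1 : ℝ)) x ≤
        (1 + x) ^ 2 / ((m : ℝ) * (z - x) ^ 2) := by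
  have hm0 : m ≠ 0 := Nat.one_le_iff_ne_zero.mp hm
  have hm_pos : (0 : ℝ) < m := by positivity
  set l := x * log a / (a ^ ((1 : ℝ) / m) - 1) with hl_def
  have hl : 0 ≤ l := div_nonneg (mul_nonneg hx (log_nonneg ha.le))
    (sub_nonneg.2 (one_le_rpow ha.le (by positivity)))
  have hlx : l / m ≤ x := by
    rw [div_le_iff₀ hm_pos, hl_def, mul_div_assoc]
    exact mul_le_mul_of_nonneg_left (log_div_rpow_one_div_sub_one_le ha hm_pos) hx
  rw [szaszKantCM, szaszKant_eq_poissonKantorovich, szaszKant_eq_poissonKantorovich]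
  exact ⟨poissonKantorovich_indicator_Ici_le hl hm0 hxz,
    poissonKantorovich_indicator_Ici_le_one_add_sq_div hl hm0 hlx hxz⟩
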